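/- arXiv:2604.15752 — 2 statements merged into one kernel-verified Lean document; each statement's English description precedes it below -/
import Mathlib

section
/- Let U ⊆ ℝ^d be open, and let W : U → Matrix (Fin n) (Fin r) ℂ, G_μ : U → Matrix (Fin n) (Fin n) ℂ (Hermitian valued), and A_μ : U → Matrix (Fin r) (Fin r) ℂ (anti-Hermitian valued) be twice continuously differentiable maps satisfying the horizontal-lift equation ∂_μ W = G_μ W − W (A_μ)ᵀ on U for every μ. Define F_{μν} := ∂_μ A_ν − ∂_ν A_μ + [A_μ, A_ν] and F̃_{μν} := ∂_μ G_ν − ∂_ν G_μ − [G_μ, G_ν]. Then at every point of U and for all μ, ν one has F̃_{μν} W = W (F_{μν})ᵀ. -/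
/-! Differentiating the lift equation `∂_β W = G_β W − W B_β` (with `B_β = (A_β)ᵀ`) once more gives
`∂_α ∂_β W = (∂_α G_β + G_β G_α) W − G_β W B_α − G_α W B_β + W (B_α B_β − ∂_α B_β)`.
The mixed terms are symmetric in `α, β`, so by the symmetry of second derivatives of the `C²`
amplitude `W`, antisymmetrising in `α, β` leaves exactly `F̃_{αβ} W − W (F_{αβ})ᵀ = 0`. -/

open Matrix

/-- The partial derivative `∂_μ` of a matrix-valued function on `ℝ^d`, taken entrywise. -/
noncomputable def matPDeriv {d n m : ℕ} (μ : Fin d)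
    (f : (Fin d → ℝ) → Matrix (Fin n) (Fin m) ℂ) (x : Fin d → ℝ) :
    Matrix (Fin n) (Fin m) ℂ :=
  Matrix.of fun i j => fderiv ℝ (fun y => f y i j) x (Pi.single μ 1)

theorem fderiv_fderiv_apply_comm {𝕜 E F : Type*} [RCLike 𝕜] [NormedAddCommGroup E]
    [NormedSpace 𝕜 E] [NormedAddCommGroup F] [NormedSpace 𝕜 F] {f : E → F} {x : E}
    (hf : ContDiffAt 𝕜 2 f x) (v w : E) :
    fderiv 𝕜 (fun y => fderiv 𝕜 f y v) x w = fderiv 𝕜 (fun y => fderiv 𝕜 f y w) x v := by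
  -- The Lie bracket of two constant vector fields vanishes.
  have h := VectorField.fderiv_apply_lieBracket hf (by simp) (differentiableAt_const v)
    (differentiableAt_const w)
  simp only [VectorField.lieBracket, fderiv_fun_const, Pi.zero_apply, _root_.zero_apply, sub_self,
    map_zero] at h
  exact sub_eq_zero.mp h.symm

section matPDeriv

variable {d n m k : ℕ} {x : Fin d → ℝ}

theorem differentiableAt_mul_apply {f : (Fin d → ℝ) → Matrix (Fin n) (Fin m) ℂ}
    {g : (Fin d → ℝ) → Matrix (Fin m) (Fin k) ℂ}
    (hf : ∀ i j, DifferentiableAt ℝ (fun y => f y i j) x)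
    (hg : ∀ i j, DifferentiableAt ℝ (fun y => g y i j) x) (i : Fin n) (j : Fin k) :
    DifferentiableAt ℝ (fun y => (f y * g y) i j) x := by
  simpa only [mul_apply] using DifferentiableAt.fun_sum fun l _ => (hf i l).fun_mul (hg l j)

theorem Filter.EventuallyEq.matPDeriv_eq {f g : (Fin d → ℝ) → Matrix (Fin n) (Fin m) ℂ}
    (h : f =ᶠ[nhds x] g) (μ : Fin d) : matPDeriv μ f x = matPDeriv μ g x := by
  ext i j
  have hij : (fun y => f y i j) =ᶠ[nhds x] fun y => g y i j := h.mono fun y hy => congrFun₂ hy i j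
  simp only [matPDeriv, of_apply, hij.fderiv_eq]

theorem matPDeriv_transpose {f : (Fin d → ℝ) → Matrix (Fin n) (Fin m) ℂ} (μ : Fin d) :
    matPDeriv μ (fun y => (f y)ᵀ) x = (matPDeriv μ f x)ᵀ :=
  rfl

theorem matPDeriv_sub {f g : (Fin d → ℝ) → Matrix (Fin n) (Fin m) ℂ}
    (hf : ∀ i j, DifferentiableAt ℝ (fun y => f y i j) x)
    (hg : ∀ i j, DifferentiableAt ℝ (fun y => g y i j) x) (μ : Fin d) :
    matPDeriv μ (fun y => f y - g y) x = matPDeriv μ f x - matPDeriv μ g x := by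
  ext i j
  exact congrArg (· (Pi.single μ 1)) (fderiv_fun_sub (hf i j) (hg i j))

theorem matPDeriv_mul {f : (Fin d → ℝ) → Matrix (Fin n) (Fin m) ℂ}
    {g : (Fin d → ℝ) → Matrix (Fin m) (Fin k) ℂ}
    (hf : ∀ i j, DifferentiableAt ℝ (fun y => f y i j) x)
    (hg : ∀ i j, DifferentiableAt ℝ (fun y => g y i j) x) (μ : Fin d) :
    matPDeriv μ (fun y => f y * g y) x = matPDeriv μ f x * g x + f x * matPDeriv μ g x := by
  ext i j
  simp only [matPDeriv, of_apply, mul_apply, Matrix.add_apply]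
  rw [fderiv_fun_sum (A := fun l y => f y i l * g y l j) fun l _ => (hf i l).fun_mul (hg l j),
    ← Finset.sum_add_distrib]
  simp only [FunLike.coe_sum, Finset.sum_apply]
  refine Finset.sum_congr rfl fun l _ => ?_
  rw [fderiv_fun_mul (hf i l) (hg l j)]
  simp only [_root_.add_apply, _root_.smul_apply, smul_eq_mul]
  ring

theorem matPDeriv_matPDeriv_comm {f : (Fin d → ℝ) → Matrix (Fin n) (Fin m) ℂ}
    (hf : ∀ i j, ContDiffAt ℝ 2 (fun y => f y i j) x) (μ ν : Fin d) :
    matPDeriv μ (matPDeriv ν f) x = matPDeriv ν (matPDeriv μ f) x := by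
  ext i j
  exact fderiv_fderiv_apply_comm (hf i j) _ _

theorem matPDeriv_matPDeriv_of_lift {α β : Fin d} {W : (Fin d → ℝ) → Matrix (Fin n) (Fin m) ℂ}
    {Gβ : (Fin d → ℝ) → Matrix (Fin n) (Fin n) ℂ} {Bβ : (Fin d → ℝ) → Matrix (Fin m) (Fin m) ℂ}
    {Gα : Matrix (Fin n) (Fin n) ℂ} {Bα : Matrix (Fin m) (Fin m) ℂ}
    (hW : ∀ i j, DifferentiableAt ℝ (fun y => W y i j) x)
    (hGβ : ∀ i j, DifferentiableAt ℝ (fun y => Gβ y i j) x)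
    (hBβ : ∀ i j, DifferentiableAt ℝ (fun y => Bβ y i j) x)
    (hliftβ : matPDeriv β W =ᶠ[nhds x] fun y => Gβ y * W y - W y * Bβ y)
    (hliftα : matPDeriv α W x = Gα * W x - W x * Bα) :
    matPDeriv α (matPDeriv β W) x
      = (matPDeriv α Gβ x + Gβ x * Gα) * W x - Gβ x * W x * Bα - Gα * W x * Bβ x
        + W x * (Bα * Bβ x - matPDeriv α Bβ x) := by
  rw [hliftβ.matPDeriv_eq,
    matPDeriv_sub (differentiableAt_mul_apply hGβ hW) (differentiableAt_mul_apply hW hBβ),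
    matPDeriv_mul hGβ hW, matPDeriv_mul hW hBβ, hliftα]
  simp only [Matrix.add_mul, Matrix.sub_mul, Matrix.mul_sub, Matrix.mul_assoc]
  abel

end matPDeriv

theorem dual_curvature_intertwines_general {d n r : ℕ} (U : Set (Fin d → ℝ)) (hU : IsOpen U)
    (W : (Fin d → ℝ) → Matrix (Fin n) (Fin r) ℂ)
    (G : Fin d → (Fin d → ℝ) → Matrix (Fin n) (Fin n) ℂ)
    (A : Fin d → (Fin d → ℝ) → Matrix (Fin r) (Fin r) ℂ)
    (hWC2 : ∀ i j, ContDiffOn ℝ 2 (fun x => W x i j) U)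
    (hGC2 : ∀ μ i j, ContDiffOn ℝ 2 (fun x => G μ x i j) U)
    (hAC2 : ∀ μ i j, ContDiffOn ℝ 2 (fun x => A μ x i j) U)
    (hlift : ∀ μ, ∀ x ∈ U, matPDeriv μ W x = G μ x * W x - W x * (A μ x)ᵀ) :
    ∀ x ∈ U, ∀ μ ν : Fin d,
      (matPDeriv μ (G ν) x - matPDeriv ν (G μ) x
          - (G μ x * G ν x - G ν x * G μ x)) * W x
      = W x * (matPDeriv μ (A ν) x - matPDeriv ν (A μ) x
          + (A μ x * A ν x - A ν x * A μ x))ᵀ := by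
  intro x hx μ ν
  have hUx := hU.mem_nhds hx
  have hW i j := ((hWC2 i j).contDiffAt hUx).differentiableAt two_ne_zero
  have hG κ i j := ((hGC2 κ i j).contDiffAt hUx).differentiableAt two_ne_zero
  have hAT κ i j : DifferentiableAt ℝ (fun y => (A κ y)ᵀ i j) x :=
    ((hAC2 κ j i).contDiffAt hUx).differentiableAt two_ne_zero
  have hliftNear κ : matPDeriv κ W =ᶠ[nhds x] fun y => G κ y * W y - W y * (A κ y)ᵀ :=
    Filter.eventuallyEq_of_mem hUx (hlift κ)
  have hsecond α β := matPDeriv_matPDeriv_of_lift (α := α) (hW := hW) (hGβ := hG β)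
    (Bβ := fun y => (A β y)ᵀ) (hBβ := hAT β) (hliftNear β) (hlift α x hx)
  have hsymm := matPDeriv_matPDeriv_comm (fun i j => (hWC2 i j).contDiffAt hUx) μ ν
  rw [hsecond, hsecond, matPDeriv_transpose, matPDeriv_transpose, ← sub_eq_zero] at hsymm
  rw [← sub_eq_zero, ← hsymm]
  simp only [transpose_add, transpose_sub, transpose_mul, Matrix.add_mul, Matrix.sub_mul,
    Matrix.mul_add, Matrix.mul_sub, Matrix.mul_assoc]
  abel

/-- For a twice continuously differentiable purification amplitude `W`,
Hermitian `G_μ` and anti-Hermitian `A_μ` satisfying the horizontal-lift equation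
`∂_μ W = G_μ W − W (A_μ)ᵀ` on an open set `U`, the curvature
`F_{μν} = ∂_μ A_ν − ∂_ν A_μ + [A_μ, A_ν]` and the dual curvature
`F̃_{μν} = ∂_μ G_ν − ∂_ν G_μ − [G_μ, G_ν]` satisfy `F̃_{μν} W = W (F_{μν})ᵀ` on `U`. -/
theorem dual_curvature_intertwines {d n r : ℕ} (U : Set (Fin d → ℝ)) (hU : IsOpen U)
    (W : (Fin d → ℝ) → Matrix (Fin n) (Fin r) ℂ)
    (G : Fin d → (Fin d → ℝ) → Matrix (Fin n) (Fin n) ℂ)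
    (A : Fin d → (Fin d → ℝ) → Matrix (Fin r) (Fin r) ℂ)
    (hWC2 : ∀ i j, ContDiffOn ℝ 2 (fun x => W x i j) U)
    (hGC2 : ∀ μ i j, ContDiffOn ℝ 2 (fun x => G μ x i j) U)
    (hAC2 : ∀ μ i j, ContDiffOn ℝ 2 (fun x => A μ x i j) U)
    (hGHerm : ∀ μ, ∀ x ∈ U, (G μ x).IsHermitian)
    (hAAnti : ∀ μ, ∀ x ∈ U, (A μ x)ᴴ = -(A μ x))
    (hlift : ∀ μ, ∀ x ∈ U, matPDeriv μ W x = G μ x * W x - W x * (A μ x)ᵀ) :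
    ∀ x ∈ U, ∀ μ ν : Fin d,
      (matPDeriv μ (G ν) x - matPDeriv ν (G μ) x
          - (G μ x * G ν x - G ν x * G μ x)) * W x
      = W x * (matPDeriv μ (A ν) x - matPDeriv ν (A μ) x
          + (A μ x * A ν x - A ν x * A μ x))ᵀ :=
  dual_curvature_intertwines_general U hU W G A hWC2 hGC2 hAC2 hlift
end

section
/- For real parameters a and b with b > 0, define G₁(a,b) := (1/2)[[0, −i e^{−b−ia}],[i e^{−b+ia}, 0]], G₂(a,b) := (1/(2(e^{2b}−1)))[[1, −e^{b−ia}],[−e^{b+ia}, 1]], the dual curvature components F̃₁₂ := ∂G₂/∂a − ∂G₁/∂b − [G₁, G₂] and F̃₂₁ := −F̃₁₂, and the metric entries g₁₁ := e^{−2b}/4 and g₂₂ := 1/(4(e^{2b}−1)). Then the scalar curvature measure 𝒞 := −(1/(4 g₁₁ g₂₂)) (tr(F̃₁₂ F̃₁₂) + tr(F̃₂₁ F̃₂₁)) equals 4 for all (a,b) with b > 0. -/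
open Matrix Complex

/-- The component `G₁` of the Hermitian 1-form for the parameter `a` in the qubit
phase/phase-diffusion model. -/
noncomputable def G1AB (a b : ℝ) : Matrix (Fin 2) (Fin 2) ℂ :=
  (1/2 : ℂ) • !![0, -Complex.I * Complex.exp (-(b : ℂ) - Complex.I * a);
                 Complex.I * Complex.exp (-(b : ℂ) + Complex.I * a), 0]

/-- The component `G₂` of the Hermitian 1-form for the parameter `b` in the qubit
phase/phase-diffusion model. -/
noncomputable def G2AB (a b : ℝ) : Matrix (Fin 2) (Fin 2) ℂ :=
  (1 / (2 * (Complex.exp (2 * (b : ℂ)) - 1))) •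
    !![1, -Complex.exp ((b : ℂ) - Complex.I * a);
       -Complex.exp ((b : ℂ) + Complex.I * a), 1]

/-- Entrywise partial derivative with respect to the first parameter `a`. -/
noncomputable def pderivA (f : ℝ → ℝ → Matrix (Fin 2) (Fin 2) ℂ) (a b : ℝ) :
    Matrix (Fin 2) (Fin 2) ℂ :=
  Matrix.of fun i j => deriv (fun t : ℝ => f t b i j) a

/-- Entrywise partial derivative with respect to the second parameter `b`. -/
noncomputable def pderivB (f : ℝ → ℝ → Matrix (Fin 2) (Fin 2) ℂ) (a b : ℝ) :
    Matrix (Fin 2) (Fin 2) ℂ :=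
  Matrix.of fun i j => deriv (fun t : ℝ => f a t i j) b

/-- The dual curvature component `F̃₁₂ = ∂G₂/∂a − ∂G₁/∂b − [G₁, G₂]`. -/
noncomputable def Ftilde12 (a b : ℝ) : Matrix (Fin 2) (Fin 2) ℂ :=
  pderivA G2AB a b - pderivB G1AB a b - (G1AB a b * G2AB a b - G2AB a b * G1AB a b)

/-!
The two derivatives and the commutator are explicit, and in `F̃₁₂` the `e^{b ∓ ia}` entries of
`∂G₂/∂a` combine with the `e^{-b ∓ ia}` entries of `∂G₁/∂b` through `e^{2b} - (e^{2b} - 1) = 1`: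
`F̃₁₂ = (2(e^{2b} - 1))⁻¹ [[-i, i e^{-b-ia}], [-i e^{-b+ia}, i]]`, which is traceless.
Hence `tr (F̃₁₂ F̃₁₂) = -e^{-2b} / (2(e^{2b} - 1)) = -8 g₁₁ g₂₂`, and `𝒞 = 4`.
-/

open Complex

theorem Matrix.trace_mul_self_fin_two {R : Type*} [CommRing R] (A : Matrix (Fin 2) (Fin 2) R) :
    trace (A * A) = A 0 0 ^ 2 + 2 * (A 0 1 * A 1 0) + A 1 1 ^ 2 := by
  simp only [trace_fin_two, mul_apply, Fin.sum_univ_two]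
  ring

theorem Complex.deriv_ofReal (t : ℝ) : deriv ((↑) : ℝ → ℂ) t = 1 :=
  ofRealCLM.hasDerivAt.deriv

theorem Real.exp_two_mul_sub_one_ne_zero {b : ℝ} (hb : b ≠ 0) : Real.exp (2 * b) - 1 ≠ 0 := by
  rw [sub_ne_zero, Ne, Real.exp_eq_one_iff]
  exact mul_ne_zero two_ne_zero hb

theorem Complex.exp_two_mul_ofReal_sub_one_ne_zero {b : ℝ} (hb : b ≠ 0) : exp (2 * b) - 1 ≠ 0 := by
  exact_mod_cast Real.exp_two_mul_sub_one_ne_zero hb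

theorem pderivA_G2AB (a b : ℝ) :
    pderivA G2AB a b = (1 / (2 * (exp (2 * b) - 1))) •
      !![0, I * exp (b - I * a); -I * exp (b + I * a), 0] := by
  ext i j
  fin_cases i <;> fin_cases j <;>
    simp (disch := fun_prop) [mul_comm I, pderivA, G2AB, deriv_cexp, deriv_ofReal]

theorem pderivB_G1AB (a b : ℝ) :
    pderivB G1AB a b = (1 / 2 : ℂ) • !![0, I * exp (-b - I * a); -I * exp (-b + I * a), 0] := by
  ext i j
  fin_cases i <;> fin_cases j <;>
    simp (disch := fun_prop) [pderivB, G1AB, deriv_cexp, deriv_ofReal]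

theorem G1AB_mul_G2AB_sub_G2AB_mul_G1AB (a b : ℝ) :
    G1AB a b * G2AB a b - G2AB a b * G1AB a b =
      (1 / (2 * (exp (2 * b) - 1))) • !![I, 0; 0, -I] := by
  have hp : exp (-b - I * a) = (exp (b + I * a))⁻¹ := by rw [← exp_neg]; ring_nf
  have hq : exp (-b + I * a) = (exp (b - I * a))⁻¹ := by rw [← exp_neg]; ring_nf
  ext i j
  fin_cases i <;> fin_cases j <;>
    simp only [G1AB, G2AB, hp, hq, Matrix.sub_apply, Matrix.mul_apply, Fin.sum_univ_two,
      Matrix.smul_apply, of_apply, cons_val', cons_val_zero, cons_val_one, cons_val_fin_one,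
      smul_eq_mul, Fin.zero_eta, Fin.mk_one] <;>
    field_simp <;> ring

theorem Ftilde12_eq (a : ℝ) {b : ℝ} (hb : b ≠ 0) :
    Ftilde12 a b = (1 / (2 * (exp (2 * b) - 1))) •
      !![-I, I * exp (-b - I * a); -I * exp (-b + I * a), I] := by
  have hden := exp_two_mul_ofReal_sub_one_ne_zero hb
  have hp : exp (b - I * a) = exp (2 * b) * exp (-b - I * a) := by rw [← exp_add]; ring_nf
  have hq : exp (b + I * a) = exp (2 * b) * exp (-b + I * a) := by rw [← exp_add]; ring_nf
  rw [Ftilde12, pderivA_G2AB, pderivB_G1AB, G1AB_mul_G2AB_sub_G2AB_mul_G1AB]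
  ext i j
  fin_cases i <;> fin_cases j <;>
    simp only [hp, hq, Matrix.sub_apply, Matrix.smul_apply, of_apply, cons_val', cons_val_zero,
      cons_val_one, cons_val_fin_one, smul_eq_mul, Fin.zero_eta, Fin.mk_one] <;>
    field_simp <;> ring

theorem trace_Ftilde12_mul_self (a : ℝ) {b : ℝ} (hb : b ≠ 0) :
    trace (Ftilde12 a b * Ftilde12 a b) =
      ((-Real.exp (-(2 * b)) / (2 * (Real.exp (2 * b) - 1)) : ℝ) : ℂ) := by
  have hden := exp_two_mul_ofReal_sub_one_ne_zero hb
  have hv : exp (-b + I * a) = (exp (2 * b) * exp (-b - I * a))⁻¹ := by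
    rw [← exp_add, ← exp_neg]; ring_nf
  rw [Matrix.trace_mul_self_fin_two, Ftilde12_eq a hb]
  simp only [hv, Matrix.smul_apply, of_apply, cons_val', cons_val_zero, cons_val_one,
    cons_val_fin_one, smul_eq_mul]
  push_cast
  rw [exp_neg]
  field_simp
  linear_combination (2 * exp (2 * b) - 2) * I_sq

/-- For the qubit phase/phase-diffusion model with `b > 0`, with diagonal
Bures metric entries `g₁₁ = e^{−2b}/4` and `g₂₂ = 1/(4(e^{2b} − 1))`, the scalar curvature
measure `𝒞 = −(1/(4 g₁₁ g₂₂)) (tr(F̃₁₂ F̃₁₂) + tr(F̃₂₁ F̃₂₁))` with `F̃₂₁ = −F̃₁₂`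
equals `4`. -/
theorem qubit_model_curvature_measure (a b : ℝ) (hb : 0 < b) :
    -(1 / (4 * ((Real.exp (-(2 * b)) / 4 : ℝ) : ℂ)
              * ((1 / (4 * (Real.exp (2 * b) - 1)) : ℝ) : ℂ)))
        * (Matrix.trace (Ftilde12 a b * Ftilde12 a b)
            + Matrix.trace ((-Ftilde12 a b) * (-Ftilde12 a b)))
      = 4 := by
  have hden := Real.exp_two_mul_sub_one_ne_zero hb.ne'
  rw [neg_mul_neg, trace_Ftilde12_mul_self a hb.ne']
  norm_cast
  field_simp
  ring
end
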